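/- arXiv:1205.5124 — 2 statements merged into one kernel-verified Lean document; each statement's English description precedes it below -/
import Mathlib

section
/- For real numbers a, b with a > |b| and any nonnegative integer n, the integral ∫₀^π dφ/(a + b·cos φ)^{n+1} equals π·P_n(a/√(a²−b²))/(a²−b²)^{(n+1)/2}, where P_n is the n-th Legendre polynomial. -/
open Real intervalIntegral

/-- The `n`-th Legendre polynomial via the Rodrigues formula. -/
noncomputable def legendreP (n : ℕ) (x : ℝ) : ℝ :=
  (1 / (2 ^ n * n.factorial)) * iteratedDeriv n (fun y : ℝ => (y ^ 2 - 1) ^ n) x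

section PolyPart
open Polynomial

lemma itd_add (j : ℕ) (p q : ℝ[X]) :
    derivative^[j] (p + q) = derivative^[j] p + derivative^[j] q := by
  induction j generalizing p q with
  | zero => simp
  | succ j ih => simp [Function.iterate_succ_apply, ih]

lemma L1 (j : ℕ) (q : ℝ[X]) :
    derivative^[j] (X * q) = X * derivative^[j] q + (j : ℝ[X]) * derivative^[j-1] q := by
  induction j generalizing q with
  | zero => simp
  | succ j ih =>
    rw [Function.iterate_succ_apply, derivative_mul, derivative_X, one_mul, itd_add, ih,
      ← Function.iterate_succ_apply]
    cases j with
    | zero => push_cast; ring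
    | succ j =>
      rw [show j + 1 - 1 = j from rfl, ← Function.iterate_succ_apply,
        show j + 1 + 1 - 1 = j + 1 from rfl]
      push_cast; ring

lemma dX2 : derivative ((X:ℝ[X])^2 - 1) = 2 * X := by
  simp [derivative_sq, map_ofNat]

lemma L2 (j : ℕ) (q : ℝ[X]) :
    derivative^[j] (((X:ℝ[X])^2 - 1) * q) = (X^2 - 1) * derivative^[j] q
      + 2 * (j : ℝ[X]) * (X * derivative^[j-1] q)
      + (j : ℝ[X]) * ((j : ℝ[X]) - 1) * derivative^[j-2] q := by
  induction j generalizing q with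
  | zero => simp
  | succ j ih =>
    rw [Function.iterate_succ_apply, derivative_mul, dX2, itd_add, ih, mul_assoc,
      show (2:ℝ[X]) * (X * q) = ((2:ℕ):ℝ[X]) * (X * q) by norm_num,
      iterate_derivative_natCast_mul, L1, ← Function.iterate_succ_apply]
    cases j with
    | zero => push_cast; simp; ring
    | succ j =>
      rw [show j + 1 - 1 = j from rfl, ← Function.iterate_succ_apply,
        show j + 1 + 1 - 1 = j + 1 from rfl, show j + 1 + 1 - 2 = j from rfl]
      cases j with
      | zero => push_cast; simp; ring
      | succ j =>
        rw [show j + 1 + 1 - 2 = j from rfl, ← Function.iterate_succ_apply]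
        simp only [Nat.succ_eq_add_one]
        push_cast; ring

lemma dF (n : ℕ) : derivative ((((X:ℝ[X])^2 - 1))^(n+1))
    = ((2*(n+1) : ℕ) : ℝ[X]) * (X * ((X^2-1))^n) := by
  rw [derivative_pow_succ, dX2, show ((n:ℝ)+1) = ((n+1 : ℕ) : ℝ) by push_cast; ring,
    Polynomial.C_eq_natCast]
  push_cast; ring

lemma lemA (n j : ℕ) :
    derivative^[j+1] ((((X:ℝ[X])^2 - 1))^(n+1)) =
      ((2*(n+1) : ℕ) : ℝ[X]) * (X * derivative^[j] (((X^2-1))^n)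
        + (j : ℝ[X]) * derivative^[j-1] (((X^2-1))^n)) := by
  rw [Function.iterate_succ_apply, dF, iterate_derivative_natCast_mul, L1, mul_add]

lemma c1 : derivative (((X:ℝ[X])^2-1)^2) = 4*X^3 - 4*X := by
  rw [derivative_sq, dX2]; simp [map_ofNat]; ring

lemma c2 : derivative^[2] (((X:ℝ[X])^2-1)^2) = 12*X^2 - 4 := by
  have e : derivative^[2] (((X:ℝ[X])^2-1)^2) = derivative (derivative (((X:ℝ[X])^2-1)^2)) := rfl
  rw [e, c1]
  simp [map_ofNat]
  ring

lemma star2 (t : ℕ) :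
    ((X:ℝ[X])^2 - 1) * derivative^[t+1] ((X^2-1)^(t+1)) =
      2 * X * derivative^[t] ((X^2-1)^(t+1))
      + (t:ℝ[X]) * ((t:ℝ[X])+3) * derivative^[t-1] ((X^2-1)^(t+1)) := by
  have ode : ((X:ℝ[X])^2-1) * derivative ((X^2-1)^(t+1))
      = ((2*(t+1):ℕ):ℝ[X]) * (X * (X^2-1)^(t+1)) := by
    rw [dF]; push_cast; ring
  revert ode
  match t with
  | 0 => intro ode; simp [dX2, map_ofNat]; ring
  | 1 =>
    intro ode
    rw [show (1:ℕ)+1 = 2 from rfl, c2, Function.iterate_one, c1]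
    simp [map_ofNat]
    ring
  | (s+2) =>
    intro ode
    have h := congrArg (derivative^[s+2]) ode
    rw [L2, iterate_derivative_natCast_mul, L1, ← Function.iterate_succ_apply,
      show s+2-1 = s+1 from rfl, show s+2-2 = s from rfl,
      ← Function.iterate_succ_apply, ← Function.iterate_succ_apply] at h
    simp only [Nat.succ_eq_add_one, show s+1+1 = s+2 from rfl] at h
    rw [show s+2-1 = s+1 from rfl]
    push_cast at h ⊢
    linear_combination h

lemma bonnetP (t : ℕ) :
    derivative^[t+3] (((X:ℝ[X])^2-1)^(t+3)) =
      2*(2*(t:ℝ[X])+5) * X * derivative^[t+2] ((X^2-1)^(t+2))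
      - 4*((t:ℝ[X])+2)^2 * derivative^[t+1] ((X^2-1)^(t+1)) := by
  have e1 := lemA (t+2) (t+2)
  have e2 := lemA (t+1) (t+1)
  have e3 := lemA (t+1) t
  have e4 := star2 t
  simp only [show t+2+1 = t+3 from rfl, show t+1+1 = t+2 from rfl,
    show t+2-1 = t+1 from rfl, show t+1-1 = t from rfl] at e1 e2 e3 e4 ⊢
  push_cast at e1 e2 e3 e4 ⊢
  linear_combination e1 - (2*((t:ℝ[X])+2)*X)*e2 + (2*((t:ℝ[X])+2)*((t:ℝ[X])+3))*e3
    - (4*((t:ℝ[X])+2)^2)*e4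

lemma itd_eval (n : ℕ) (p : ℝ[X]) (x : ℝ) :
    iteratedDeriv n (fun y => p.eval y) x = (derivative^[n] p).eval x := by
  induction n generalizing p x with
  | zero => simp
  | succ n ih =>
    rw [iteratedDeriv_succ',
      show deriv (fun y => p.eval y) = fun y => (derivative p).eval y from
        funext fun y => Polynomial.deriv p, ih, ← Function.iterate_succ_apply]

lemma legendreP_eval (n : ℕ) (x : ℝ) :
    legendreP n x = (1 / (2^n * n.factorial : ℝ)) *
      (derivative^[n] (((X:ℝ[X])^2-1)^n)).eval x := by
  unfold legendreP
  rw [show (fun y : ℝ => (y^2-1)^n) = (fun y => ((((X:ℝ[X])^2-1))^n).eval y) from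
    funext fun y => by simp, itd_eval]

lemma legendreP_zero (x : ℝ) : legendreP 0 x = 1 := by simp [legendreP]

lemma legendreP_one (x : ℝ) : legendreP 1 x = x := by
  rw [legendreP_eval]
  simp [Function.iterate_one, dX2, map_ofNat, Nat.factorial]
  ring

lemma legendreP_two (x : ℝ) : legendreP 2 x = (3*x^2 - 1)/2 := by
  rw [legendreP_eval, c2]
  simp [map_ofNat, Nat.factorial]
  ring

lemma bonnetL (m : ℕ) (hm : 1 ≤ m) (x : ℝ) :
    ((m:ℝ)+1) * legendreP (m+1) x = (2*m+1) * x * legendreP m x - m * legendreP (m-1) x := by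
  match m with
  | 1 =>
    rw [legendreP_two, legendreP_one, legendreP_zero]
    norm_num; ring
  | (t+2) =>
    have E := congrArg (Polynomial.eval x) (bonnetP t)
    simp only [eval_mul, eval_add, eval_sub, eval_natCast, eval_ofNat, eval_X, eval_pow,
      eval_one] at E
    simp only [show t+2+1 = t+3 from rfl, show t+2-1 = t+1 from rfl]
    rw [legendreP_eval (t+3), legendreP_eval (t+2), legendreP_eval (t+1), E]
    have f2 : ((t+2).factorial : ℝ) = (t+2) * (t+1).factorial := by
      rw [show t+2 = (t+1)+1 from rfl, Nat.factorial_succ]; push_cast; ring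
    have f3 : ((t+3).factorial : ℝ) = (t+3) * ((t+2) * (t+1).factorial) := by
      rw [show t+3 = (t+2)+1 from rfl, Nat.factorial_succ]; push_cast [f2]; ring
    rw [f3, f2, show (t:ℕ)+3 = (t+1)+2 from rfl, show (t:ℕ)+2 = (t+1)+1 from rfl,
      pow_succ, pow_succ, pow_succ]
    have h1 : ((t+1).factorial : ℝ) ≠ 0 := by positivity
    have h2 : (2:ℝ)^(t+1) ≠ 0 := by positivity
    push_cast
    field_simp
    ring

end PolyPart

lemma den_pos {a b : ℝ} (h : a > |b|) (φ : ℝ) : 0 < a + b * Real.cos φ := by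
  have h1 : |b * Real.cos φ| ≤ |b| := by
    rw [abs_mul]
    exact mul_le_of_le_one_right (abs_nonneg b) (abs_cos_le_one φ)
  have := neg_abs_le (b * Real.cos φ)
  linarith

lemma cont_den {a b : ℝ} (h : a > |b|) (m : ℕ) :
    Continuous fun φ : ℝ => 1 / (a + b * Real.cos φ) ^ m := by
  apply Continuous.div continuous_const
  · exact (continuous_const.add (continuous_const.mul Real.continuous_cos)).pow m
  · intro φ
    exact pow_ne_zero m (den_pos h φ).ne'

lemma sq_pos {a b : ℝ} (h : a > |b|) : 0 < a ^ 2 - b ^ 2 := by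
  have hb : |b| ^ 2 = b ^ 2 := sq_abs b
  nlinarith [abs_nonneg b]

lemma base_integral {a b : ℝ} (h : a > |b|) :
    ∫ φ in (0:ℝ)..π, 1 / (a + b * Real.cos φ) = π / Real.sqrt (a ^ 2 - b ^ 2) := by
  set c := Real.sqrt (a ^ 2 - b ^ 2) with hcdef
  have hc : 0 < c := Real.sqrt_pos.mpr (sq_pos h)
  have hc2 : c ^ 2 = a ^ 2 - b ^ 2 := Real.sq_sqrt (sq_pos h).le
  have ha : 0 < a := lt_of_le_of_lt (abs_nonneg b) h
  have hden2 : ∀ φ : ℝ, 0 < a + c + b * Real.cos φ := by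
    intro φ; have := den_pos h φ; linarith
  have hderiv : ∀ φ : ℝ, HasDerivAt
      (fun φ => (φ - 2 * Real.arctan (b * Real.sin φ / (a + c + b * Real.cos φ))) / c)
      (1 / (a + b * Real.cos φ)) φ := by
    intro φ
    have hnum : HasDerivAt (fun φ : ℝ => b * Real.sin φ) (b * Real.cos φ) φ :=
      (Real.hasDerivAt_sin φ).const_mul b
    have hden : HasDerivAt (fun φ : ℝ => a + c + b * Real.cos φ) (b * -Real.sin φ) φ :=
      ((Real.hasDerivAt_cos φ).const_mul b).const_add (a + c)
    have hu := hnum.div hden (hden2 φ).ne'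
    have harc := hu.arctan
    have hGd := ((hasDerivAt_id φ).sub (harc.const_mul 2)).div_const c
    convert hGd using 1
    case e'_4 => rfl
    case e'_5 => rfl
    case e'_8 => rfl
    simp only [Pi.div_apply, Pi.pow_apply]
    have hd := den_pos h φ
    have hd2 := hden2 φ
    have pyth := Real.sin_sq_add_cos_sq φ
    have e2 : b * Real.cos φ * (a + c + b * Real.cos φ) - b * Real.sin φ * (b * -Real.sin φ)
        = b^2 + b*(a+c)*Real.cos φ := by linear_combination b^2 * pyth
    have e1 : 1 + (b * Real.sin φ / (a + c + b * Real.cos φ)) ^ 2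
        = (2*(a+c)*(a + b*Real.cos φ))/(a + c + b * Real.cos φ)^2 := by
      rw [div_pow, ← sub_eq_zero]
      field_simp
      linear_combination (b^2) * pyth + hc2
    have had : (a + c) ≠ 0 := by positivity
    rw [e1, e2, ← sub_eq_zero]
    field_simp [hd.ne', hd2.ne', hc.ne', had]
    linear_combination hc2
  have hint : IntervalIntegrable (fun φ => 1 / (a + b * Real.cos φ))
      MeasureTheory.volume 0 π := by
    have := cont_den h 1
    simpa using this.intervalIntegrable 0 π
  rw [intervalIntegral.integral_eq_sub_of_hasDerivAt (fun φ _ => hderiv φ) hint]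
  simp

lemma recur {a b : ℝ} (h : a > |b|) (n : ℕ) :
    ((n:ℝ)+1)*(a^2-b^2) * ∫ φ in (0:ℝ)..π, 1/(a+b*Real.cos φ)^(n+2)
      = (2*(n:ℝ)+1)*a * (∫ φ in (0:ℝ)..π, 1/(a+b*Real.cos φ)^(n+1))
        - (n:ℝ) * ∫ φ in (0:ℝ)..π, 1/(a+b*Real.cos φ)^n := by
  have hint : ∀ m : ℕ, IntervalIntegrable (fun φ => 1/(a+b*Real.cos φ)^m)
      MeasureTheory.volume 0 π := fun m => (cont_den h m).intervalIntegrable 0 π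
  have hderiv : ∀ φ : ℝ, HasDerivAt (fun φ => b*Real.sin φ / (a+b*Real.cos φ)^(n+1))
      ((2*(n:ℝ)+1)*a * (1/(a+b*Real.cos φ)^(n+1)) - (n:ℝ)*(1/(a+b*Real.cos φ)^n)
        - ((n:ℝ)+1)*(a^2-b^2)*(1/(a+b*Real.cos φ)^(n+2))) φ := by
    intro φ
    have hd := den_pos h φ
    have hnum : HasDerivAt (fun φ : ℝ => b * Real.sin φ) (b * Real.cos φ) φ :=
      (Real.hasDerivAt_sin φ).const_mul b
    have hinner : HasDerivAt (fun φ : ℝ => a + b * Real.cos φ) (b * -Real.sin φ) φ :=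
      ((Real.hasDerivAt_cos φ).const_mul b).const_add a
    have hden := hinner.pow (n+1)
    have hdiv := hnum.div hden (pow_ne_zero _ hd.ne')
    convert hdiv using 1
    case e'_4 => rfl
    case e'_5 => rfl
    case e'_8 => rfl
    simp only [Pi.div_apply, Pi.pow_apply]
    have pyth := Real.sin_sq_add_cos_sq φ
    rw [Nat.add_sub_cancel, ← sub_eq_zero]
    field_simp [hd.ne']
    push_cast
    linear_combination (-((n:ℝ)+1)*b^2*(a+b*Real.cos φ)^(3*n+2)) * pyth
  have hzero : (∫ φ in (0:ℝ)..π, ((2*(n:ℝ)+1)*a * (1/(a+b*Real.cos φ)^(n+1))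
      - (n:ℝ)*(1/(a+b*Real.cos φ)^n)
      - ((n:ℝ)+1)*(a^2-b^2)*(1/(a+b*Real.cos φ)^(n+2)))) = 0 := by
    rw [intervalIntegral.integral_eq_sub_of_hasDerivAt (fun φ _ => hderiv φ)
      ((((hint (n+1)).const_mul _).sub ((hint n).const_mul _)).sub ((hint (n+2)).const_mul _))]
    simp [Real.sin_pi]
  rw [intervalIntegral.integral_sub (((hint (n+1)).const_mul _).sub ((hint n).const_mul _))
      ((hint (n+2)).const_mul _),
    intervalIntegral.integral_sub ((hint (n+1)).const_mul _) ((hint n).const_mul _),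
    intervalIntegral.integral_const_mul, intervalIntegral.integral_const_mul,
    intervalIntegral.integral_const_mul] at hzero
  linarith

theorem stmt_0 (a b : ℝ) (h : a > |b|) (n : ℕ) :
    ∫ φ in (0:ℝ)..π, 1 / (a + b * Real.cos φ) ^ (n + 1)
      = π * legendreP n (a / Real.sqrt (a ^ 2 - b ^ 2))
          / (a ^ 2 - b ^ 2) ^ (((n : ℝ) + 1) / 2) := by
  have hsq := sq_pos h
  set c := Real.sqrt (a ^ 2 - b ^ 2) with hcdef
  have hc : 0 < c := Real.sqrt_pos.mpr hsq
  have hc2 : c ^ 2 = a ^ 2 - b ^ 2 := Real.sq_sqrt hsq.le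
  set x := a / c with hxdef
  have hxc : x * c = a := div_mul_cancel₀ a hc.ne'
  have key : ∀ m : ℕ,
      (∫ φ in (0:ℝ)..π, 1 / (a + b * Real.cos φ) ^ (m + 1))
        = π * legendreP m x / c ^ (m + 1) ∧
      (∫ φ in (0:ℝ)..π, 1 / (a + b * Real.cos φ) ^ (m + 2))
        = π * legendreP (m + 1) x / c ^ (m + 2) := by
    intro m
    induction m with
    | zero =>
      constructor
      · simp only [zero_add, pow_one]
        rw [base_integral h, legendreP_zero]
        ring
      · have hrec := recur h 0
        norm_num at hrec
        have hb0 : (∫ φ in (0:ℝ)..π, (a + b * Real.cos φ)⁻¹) = π / c := by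
          simpa [one_div] using base_integral h
        rw [hb0, show (∫ φ in (0:ℝ)..π, ((a + b * Real.cos φ) ^ 2)⁻¹)
            = ∫ φ in (0:ℝ)..π, 1 / (a + b * Real.cos φ) ^ 2 by simp [one_div]] at hrec
        simp only [zero_add, legendreP_one]
        rw [show a * (π / c) = a * π / c from by ring, eq_div_iff hc.ne'] at hrec
        rw [show (∫ φ in (0:ℝ)..π, 1 / (a + b * Real.cos φ) ^ 2)
            = a * (π / c) / (a ^ 2 - b ^ 2) from by
          field_simp
          linear_combination hrec]
        rw [← hc2, hxdef]
        field_simp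
    | succ m ih =>
      refine ⟨ih.2, ?_⟩
      have hrec := recur h (m + 1)
      rw [ih.1, ih.2] at hrec
      push_cast at hrec
      have hb := bonnetL (m + 1) (Nat.le_add_left 1 m) x
      simp only [Nat.add_sub_cancel] at hb
      push_cast at hb
      have hA : ((m:ℝ) + 1 + 1) * (a ^ 2 - b ^ 2) ≠ 0 := by positivity
      apply mul_left_cancel₀ hA
      rw [hrec, ← hc2, ← hxc]
      field_simp
      ring_nf
      ring_nf at hb
      linear_combination (-(c ^ 5 * c ^ (m * 2))) * hb
  rw [(key n).1]
  have hexp : (a ^ 2 - b ^ 2) ^ (((n:ℝ) + 1) / 2) = c ^ (n + 1) := by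
    rw [show ((n:ℝ)+1)/2 = (1/2) * ((n+1 : ℕ):ℝ) by push_cast; ring,
      Real.rpow_mul hsq.le, ← Real.sqrt_eq_rpow, Real.rpow_natCast]
  rw [hexp]
end

section
/- For c > 0 and any y₀ ∈ ℝ², ∫_{ℝ²} (c + ‖x − y₀‖⁴)^{−1} dx = ∫₀^∞ ∫₀^π 2r/((c + (r² + ‖y₀‖² − 2r‖y₀‖cos φ)²)) dφ dr = π²/(2√c); in particular the value is independent of y₀. -/
open Real MeasureTheory
open Set

-- ∫_{0}^{∞} (c+u²)⁻¹ du = π/(2√c)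
lemma aux_one (c : ℝ) (hc : 0 < c) :
    ∫ u in Set.Ioi (0:ℝ), (c + u ^ 2)⁻¹ = π / (2 * Real.sqrt c) := by
  have hs : (0:ℝ) < Real.sqrt c := Real.sqrt_pos.2 hc
  have h := integral_comp_mul_left_Ioi (fun u => (c + u ^ 2)⁻¹) 0 hs
  rw [mul_zero] at h
  have h2 : ∀ x : ℝ, (c + (Real.sqrt c * x) ^ 2)⁻¹ = c⁻¹ * (1 + x ^ 2)⁻¹ := by
    intro x
    rw [mul_pow, Real.sq_sqrt hc.le, ← mul_inv]
    congr 1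
    ring
  simp only [h2] at h
  rw [integral_const_mul, integral_Ioi_inv_one_add_sq, Real.arctan_zero, sub_zero] at h
  have := congrArg (fun t => Real.sqrt c * t) h
  simp only [smul_eq_mul, ← mul_assoc, mul_inv_cancel₀ hs.ne'] at this
  rw [one_mul] at this
  rw [← this, ← Real.mul_self_sqrt hc.le]
  field_simp
  rw [Real.sqrt_sq hs.le]

lemma aux_rad (c : ℝ) (hc : 0 < c) :
    ∫ y in Set.Ioi (0:ℝ), y ^ 1 • (c + y ^ 4)⁻¹ = π / (4 * Real.sqrt c) := by
  have h := integral_comp_rpow_Ioi_of_pos (g := fun u => (c + u ^ 2)⁻¹) (p := 2) two_pos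
  rw [aux_one c hc] at h
  have h2 : ∀ x ∈ Set.Ioi (0:ℝ), (2 * x ^ ((2:ℝ) - 1)) • (c + (x ^ (2:ℝ)) ^ 2)⁻¹
      = (2:ℝ) * (x ^ 1 • (c + x ^ 4)⁻¹) := by
    intro x hx
    have hx' : (0:ℝ) ≤ x := (le_of_lt hx)
    rw [show ((2:ℝ) - 1) = 1 by norm_num, Real.rpow_one,
      show ((2:ℝ)) = ((2:ℕ):ℝ) by norm_num, Real.rpow_natCast]
    simp only [smul_eq_mul, pow_one]
    ring_nf
  rw [setIntegral_congr_fun measurableSet_Ioi h2, integral_const_mul] at h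
  have : ∫ y in Set.Ioi (0:ℝ), y ^ 1 • (c + y ^ 4)⁻¹ = (π / (2 * Real.sqrt c)) / 2 := by
    rw [← h]; ring
  rw [this]; ring

lemma aux_plane (c : ℝ) (hc : 0 < c) :
    ∫ x : EuclideanSpace ℝ (Fin 2), (c + ‖x‖ ^ 4)⁻¹ = π ^ 2 / (2 * Real.sqrt c) := by
  have h := integral_fun_norm_addHaar (volume : Measure (EuclideanSpace ℝ (Fin 2)))
    (fun r => (c + r ^ 4)⁻¹)
  have hdim : Module.finrank ℝ (EuclideanSpace ℝ (Fin 2)) = 2 := finrank_euclideanSpace_fin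
  rw [hdim] at h
  have hball : (volume (Metric.ball (0 : EuclideanSpace ℝ (Fin 2)) 1)).toReal = π := by
    rw [EuclideanSpace.volume_ball]
    simp only [Fintype.card_fin]
    norm_num
    exact Real.sq_sqrt Real.pi_pos.le
  rw [measureReal_def, hball] at h
  rw [h, aux_rad c hc]
  simp only [nsmul_eq_mul, smul_eq_mul]
  push_cast
  ring

lemma aux_pos (c : ℝ) (hc : 0 < c) (t : ℝ) : 0 < c + t ^ 4 := by positivity

lemma aux_integrable (c : ℝ) (hc : 0 < c) (w : ℂ) :
    Integrable (fun z : ℂ => (c + ‖z - w‖ ^ 4)⁻¹) := by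
  have h0 : Integrable (fun z : ℂ => (1 + ‖z‖) ^ (-(4:ℝ))) := by
    apply integrable_one_add_norm (μ := volume)
    rw [Complex.finrank_real_complex]; norm_num
  have h1 : Integrable (fun z : ℂ => (1 + ‖z - w‖) ^ (-(4:ℝ))) := by
    have := (measurePreserving_sub_right (volume : Measure ℂ) w).integrable_comp_emb
      (MeasurableEquiv.subRight w).measurableEmbedding (g := fun z : ℂ => (1 + ‖z‖) ^ (-(4:ℝ)))
    exact this.2 h0
  set M : ℝ := 8 * max c⁻¹ 1 with hM
  have hcont : Continuous (fun z : ℂ => (c + ‖z - w‖ ^ 4)⁻¹) := by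
    apply Continuous.inv₀
    · continuity
    · intro z; exact (aux_pos c hc _).ne'
  refine (h1.const_mul M).mono' hcont.aestronglyMeasurable ?_
  filter_upwards with z
  set t : ℝ := ‖z - w‖ with ht
  have ht0 : 0 ≤ t := norm_nonneg _
  have h1t : (0:ℝ) < 1 + t := by linarith
  rw [Real.norm_eq_abs, abs_of_pos (inv_pos.2 (aux_pos c hc t))]
  have hrw : (1 + t) ^ (-(4:ℝ)) = ((1 + t) ^ 4)⁻¹ := by
    rw [Real.rpow_neg h1t.le, show ((4:ℝ)) = ((4:ℕ):ℝ) by norm_num, Real.rpow_natCast]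
  rw [hrw]
  have hk1 : (1:ℝ) ≤ max c⁻¹ 1 := le_max_right _ _
  have hkc : (1:ℝ) ≤ max c⁻¹ 1 * c := by
    calc (1:ℝ) = c⁻¹ * c := (inv_mul_cancel₀ hc.ne').symm
    _ ≤ _ := by gcongr; exact le_max_left _ _
  have key : (1 + t) ^ 4 ≤ M * (c + t ^ 4) := by
    have h8 : (1 + t) ^ 4 ≤ 8 * (1 + t ^ 4) := by nlinarith [sq_nonneg (1 - t), sq_nonneg (1 - t^2), sq_nonneg (t - t^2), sq_nonneg t]
    have h2 : t ^ 4 ≤ max c⁻¹ 1 * t ^ 4 := le_mul_of_one_le_left (by positivity) hk1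
    have h3 : (1:ℝ) + t ^ 4 ≤ max c⁻¹ 1 * (c + t ^ 4) := by rw [mul_add]; linarith
    have h4 := mul_le_mul_of_nonneg_left h3 (by norm_num : (0:ℝ) ≤ 8)
    have h5 : M * (c + t ^ 4) = 8 * (max c⁻¹ 1 * (c + t ^ 4)) := by rw [hM]; ring
    linarith
  rw [← div_eq_mul_inv, ← one_div, div_le_div_iff₀ (aux_pos c hc t) (by positivity)]
  nlinarith

lemma aux_norm4 (z : ℂ) : ‖z‖ ^ 4 = Complex.normSq z ^ 2 := by
  rw [show 4 = 2 * 2 from rfl, pow_mul, Complex.sq_norm]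

lemma aux_normsq (a : ℝ) (p : ℝ × ℝ) :
    Complex.normSq (Complex.polarCoord.symm p - (a : ℂ))
      = p.1 ^ 2 + a ^ 2 - 2 * p.1 * a * Real.cos p.2 := by
  rw [Complex.normSq_apply]
  simp only [Complex.polarCoord_symm_apply, Complex.sub_re, Complex.sub_im, Complex.add_re,
    Complex.add_im, Complex.mul_re, Complex.mul_im, Complex.ofReal_re, Complex.ofReal_im,
    Complex.I_re, Complex.I_im]
  nlinarith [Real.sin_sq_add_cos_sq p.2]

lemma aux_polar (c : ℝ) (hc : 0 < c) (a : ℝ) :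
    ∫ z : ℂ, (c + ‖z - (a:ℂ)‖ ^ 4)⁻¹
      = ∫ r in Set.Ioi (0:ℝ), ∫ φ in (0:ℝ)..π,
          2 * r / (c + (r ^ 2 + a ^ 2 - 2 * r * a * Real.cos φ) ^ 2) := by
  set H : ℝ × ℝ → ℝ := fun p => p.1 * (c + (p.1 ^ 2 + a ^ 2 - 2 * p.1 * a * Real.cos p.2) ^ 2)⁻¹
    with hH
  -- step A
  have stepA : ∫ z : ℂ, (c + ‖z - (a:ℂ)‖ ^ 4)⁻¹ = ∫ p in polarCoord.target, H p := by
    rw [← Complex.integral_comp_polarCoord_symm (fun z => (c + ‖z - (a:ℂ)‖ ^ 4)⁻¹)]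
    apply setIntegral_congr_fun polarCoord.open_target.measurableSet
    intro p _
    show p.1 • (c + ‖Complex.polarCoord.symm p - (a:ℂ)‖ ^ 4)⁻¹ = _
    rw [smul_eq_mul, aux_norm4, aux_normsq]
  -- integrability
  set G : ℝ × ℝ → ℝ := fun q => (c + ((q.1 - a) ^ 2 + q.2 ^ 2) ^ 2)⁻¹ with hG
  have hGint : Integrable G := by
    have h := (Complex.volume_preserving_equiv_real_prod).integrable_comp_emb
      Complex.measurableEquivRealProd.measurableEmbedding (g := G)
    rw [← h]
    have : (G ∘ Complex.measurableEquivRealProd) = fun z : ℂ => (c + ‖z - (a:ℂ)‖ ^ 4)⁻¹ := by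
      funext z
      simp only [Function.comp_apply, hG, Complex.measurableEquivRealProd_apply]
      rw [aux_norm4]
      congr 2
      rw [Complex.normSq_apply]
      simp [Complex.sub_re, Complex.sub_im]
      ring
    rw [this]
    exact aux_integrable c hc _
  have hHint : IntegrableOn H polarCoord.target := by
    have hiff := integrableOn_image_iff_integrableOn_abs_det_fderiv_smul volume
      polarCoord.open_target.measurableSet
      (fun p _ => (hasFDerivAt_polarCoord_symm p).hasFDerivWithinAt)
      polarCoord.symm.injOn G
    rw [polarCoord.symm_image_target_eq_source] at hiff
    have h1 : IntegrableOn G polarCoord.source := hGint.integrableOn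
    have h2 := hiff.1 h1
    apply h2.congr_fun ?_ polarCoord.open_target.measurableSet
    intro p hp
    dsimp only
    have hdet : (LinearMap.toContinuousLinearMap (Matrix.toLin (Module.Basis.finTwoProd ℝ)
        (Module.Basis.finTwoProd ℝ)
        !![Real.cos p.2, -p.1 * Real.sin p.2; Real.sin p.2, p.1 * Real.cos p.2])).det = p.1 := by
      conv_rhs => rw [← one_mul p.1, ← Real.cos_sq_add_sin_sq p.2]
      simp only [neg_mul, LinearMap.det_toContinuousLinearMap, LinearMap.det_toLin,
        Matrix.det_fin_two_of, sub_neg_eq_add]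
      ring
    rw [det_fderivPolarCoordSymm, smul_eq_mul, abs_of_pos hp.1, hH]
    congr 2
    simp only [hG, polarCoord_symm_apply]
    have hb : (p.1 * Real.cos p.2 - a) ^ 2 + (p.1 * Real.sin p.2) ^ 2
        = p.1 ^ 2 + a ^ 2 - 2 * p.1 * a * Real.cos p.2 := by
      linear_combination p.1 ^ 2 * Real.sin_sq_add_cos_sq p.2
    rw [hb]
  have stepC : ∫ p in polarCoord.target, H p
      = ∫ r in Ioi (0:ℝ), ∫ θ in Ioo (-π) π, H (r, θ) := by
    rw [polarCoord_target] at hHint ⊢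
    rw [MeasureTheory.Measure.volume_eq_prod ℝ ℝ] at hHint ⊢
    exact setIntegral_prod H hHint
  have stepD : ∀ r : ℝ, (∫ θ in Ioo (-π) π, H (r, θ))
      = ∫ φ in (0:ℝ)..π, 2 * r / (c + (r ^ 2 + a ^ 2 - 2 * r * a * Real.cos φ) ^ 2) := by
    intro r
    have hFc : Continuous fun θ : ℝ => H (r, θ) := by
      apply Continuous.mul continuous_const
      apply Continuous.inv₀
      · fun_prop
      · intro θ
        have h1 : (0:ℝ) ≤ (r ^ 2 + a ^ 2 - 2 * r * a * Real.cos θ) ^ 2 := sq_nonneg _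
        dsimp only
        nlinarith
    have hpi : -π ≤ (π:ℝ) := by linarith [Real.pi_pos]
    rw [show (∫ θ in Ioo (-π) π, H (r, θ)) = ∫ θ in (-π)..π, H (r, θ) by
      rw [intervalIntegral.integral_of_le hpi, integral_Ioc_eq_integral_Ioo]]
    have hsplit := intervalIntegral.integral_add_adjacent_intervals
      (hFc.intervalIntegrable (μ := volume) (-π) 0) (hFc.intervalIntegrable (μ := volume) 0 π)
    rw [← hsplit]
    have hneg : (∫ θ in (-π)..(0:ℝ), H (r, θ)) = ∫ θ in (0:ℝ)..π, H (r, -θ) := by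
      rw [intervalIntegral.integral_comp_neg (fun θ => H (r, θ))]
      norm_num
    rw [hneg]
    have hc2 : Continuous fun θ : ℝ => H (r, -θ) := hFc.comp continuous_neg
    rw [← intervalIntegral.integral_add (hc2.intervalIntegrable (μ := volume) 0 π)
      (hFc.intervalIntegrable (μ := volume) 0 π)]
    apply intervalIntegral.integral_congr
    intro φ _
    simp only [hH, Real.cos_neg]
    rw [div_eq_mul_inv]
    ring
  rw [stepA, stepC]
  exact setIntegral_congr_fun measurableSet_Ioi (fun r _ => stepD r)

theorem stmt_19 (c : ℝ) (hc : 0 < c) (y₀ : EuclideanSpace ℝ (Fin 2)) :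
    (∫ x : EuclideanSpace ℝ (Fin 2), (c + ‖x - y₀‖ ^ 4)⁻¹)
      = ∫ r in Set.Ioi (0:ℝ), ∫ φ in (0:ℝ)..π,
          2 * r / (c + (r ^ 2 + ‖y₀‖ ^ 2 - 2 * r * ‖y₀‖ * Real.cos φ) ^ 2) ∧
    (∫ r in Set.Ioi (0:ℝ), ∫ φ in (0:ℝ)..π,
        2 * r / (c + (r ^ 2 + ‖y₀‖ ^ 2 - 2 * r * ‖y₀‖ * Real.cos φ) ^ 2))
      = π ^ 2 / (2 * Real.sqrt c) := by
  set a : ℝ := ‖y₀‖ with ha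
  set M := Complex.orthonormalBasisOneI.repr with hM
  set v : ℂ := M.symm y₀ with hv
  have hva : ‖v‖ = ‖(a : ℂ)‖ := by
    rw [hv, M.symm.norm_map, Complex.norm_real, Real.norm_eq_abs, abs_of_nonneg (norm_nonneg _)]
  set R := Submodule.reflection (ℝ ∙ (v - (a:ℂ)))ᗮ with hR
  have hRv : R v = (a : ℂ) := Submodule.reflection_sub hva
  set L := M.symm.trans R with hL
  have hLy : L y₀ = (a : ℂ) := by
    rw [hL]; simp only [LinearIsometryEquiv.trans_apply]; rw [← hv, hRv]
  have htrans : (∫ x : EuclideanSpace ℝ (Fin 2), (c + ‖x - y₀‖ ^ 4)⁻¹)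
      = ∫ z : ℂ, (c + ‖z - (a:ℂ)‖ ^ 4)⁻¹ := by
    rw [← (L.symm.measurePreserving).integral_comp L.symm.toHomeomorph.measurableEmbedding
      (fun x => (c + ‖x - y₀‖ ^ 4)⁻¹)]
    congr 1
    funext z
    have h1 : L.symm z - y₀ = L.symm (z - (a:ℂ)) := by
      rw [map_sub, ← hLy, LinearIsometryEquiv.symm_apply_apply]
    simp only [h1, L.symm.norm_map]
  have hC : (∫ z : ℂ, (c + ‖z - (a:ℂ)‖ ^ 4)⁻¹) = π ^ 2 / (2 * Real.sqrt c) := by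
    have h2 : (∫ z : ℂ, (c + ‖z - (a:ℂ)‖ ^ 4)⁻¹) = ∫ z : ℂ, (c + ‖z‖ ^ 4)⁻¹ :=
      integral_sub_right_eq_self (fun z : ℂ => (c + ‖z‖ ^ 4)⁻¹) (a : ℂ)
    have h3 : (∫ z : ℂ, (c + ‖z‖ ^ 4)⁻¹) = ∫ x : EuclideanSpace ℝ (Fin 2), (c + ‖x‖ ^ 4)⁻¹ := by
      rw [← (M.measurePreserving).integral_comp M.toHomeomorph.measurableEmbedding
        (fun x => (c + ‖x‖ ^ 4)⁻¹)]
      congr 1; funext z; rw [M.norm_map]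
    rw [h2, h3, aux_plane c hc]
  exact ⟨htrans.trans (aux_polar c hc a), (aux_polar c hc a).symm.trans hC⟩
end
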